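/- For every complex number q with |q| < 1, ∑_{n≥1} q^n (−q^n; q)_∞ (q^{n+1}; q)_∞^2 (−q^3; q^3)_{n−1} = (−q^3; q^3)_∞ − (−q; q)_∞ (q; q)_∞^2. -/

import Mathlib

/-!
Put `T n = (-q^(n+1); q)_∞ (q^(n+1); q)_∞^2 (-q^3; q^3)_n`. Peeling off the first factor of the two
infinite products shows that the `n`-th summand is `T (n+1) - T n`: with `x = q^(n+1)` this is the
identity `(1 + x^3) - (1 + x)(1 - x)^2 = x(1 + x)`. So the series telescopes to `lim T - T 0`, and
`T n → (-q^3; q^3)_∞` because `(a q^n; q)_∞ = (a; q)_∞ / (a; q)_n → 1` when no factor vanishes.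
-/

/-- Finite q-Pochhammer symbol `(a; q)_n = ∏_{j=0}^{n-1} (1 - a q^j)`. -/
noncomputable def qPoch (q a : ℂ) (n : ℕ) : ℂ := ∏ j ∈ Finset.range n, (1 - a * q ^ j)

/-- Infinite q-Pochhammer symbol `(a; q)_∞ = ∏_{j=0}^{∞} (1 - a q^j)`. -/
noncomputable def qPochInf (q a : ℂ) : ℂ := ∏' j : ℕ, (1 - a * q ^ j)

open Filter Topology

section QPochhammer

variable {q : ℂ}

lemma qPoch_succ (q a : ℂ) (n : ℕ) : qPoch q a (n + 1) = qPoch q a n * (1 - a * q ^ n) :=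
  Finset.prod_range_succ _ n

lemma summable_norm_mul_pow (hq : ‖q‖ < 1) (a : ℂ) : Summable fun j : ℕ ↦ ‖-(a * q ^ j)‖ := by
  simpa [norm_mul, norm_pow] using (summable_geometric_of_lt_one (norm_nonneg q) hq).mul_left ‖a‖

lemma multipliable_qPochInf (hq : ‖q‖ < 1) (a : ℂ) : Multipliable fun j : ℕ ↦ 1 - a * q ^ j := by
  simpa [sub_eq_add_neg] using multipliable_one_add_of_summable (summable_norm_mul_pow hq a)

lemma tendsto_qPoch_qPochInf (hq : ‖q‖ < 1) (a : ℂ) :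
    Tendsto (qPoch q a) atTop (𝓝 (qPochInf q a)) :=
  (multipliable_qPochInf hq a).hasProd.tendsto_prod_nat

lemma qPochInf_ne_zero (hq : ‖q‖ < 1) {a : ℂ} (ha : ∀ j, a * q ^ j ≠ 1) : qPochInf q a ≠ 0 := by
  simpa [qPochInf, sub_eq_add_neg] using
    tprod_one_add_ne_zero_of_summable
      (fun j ↦ by rw [← sub_eq_add_neg]; exact sub_ne_zero.2 (ha j).symm)
      (summable_norm_mul_pow hq a)

lemma qPoch_ne_zero {a : ℂ} (ha : ∀ j, a * q ^ j ≠ 1) (n : ℕ) : qPoch q a n ≠ 0 :=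
  Finset.prod_ne_zero_iff.2 fun j _ ↦ sub_ne_zero.2 (ha j).symm

lemma qPoch_mul_qPochInf (hq : ‖q‖ < 1) (a : ℂ) (n : ℕ) :
    qPoch q a n * qPochInf q (a * q ^ n) = qPochInf q a := by
  have shift : ∀ j, 1 - a * q ^ n * q ^ j = 1 - a * q ^ (j + n) := fun j ↦ by ring
  simp only [qPochInf, shift]
  exact Multipliable.prod_mul_tprod_nat_mul'
    (by simpa [shift] using multipliable_qPochInf hq (a * q ^ n))

lemma qPochInf_eq_one_sub_mul (hq : ‖q‖ < 1) (a : ℂ) :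
    qPochInf q a = (1 - a) * qPochInf q (a * q) := by
  simpa [qPoch] using (qPoch_mul_qPochInf hq a 1).symm

lemma tendsto_qPochInf_mul_pow (hq : ‖q‖ < 1) {a : ℂ} (ha : ∀ j, a * q ^ j ≠ 1) :
    Tendsto (fun n ↦ qPochInf q (a * q ^ n)) atTop (𝓝 1) := by
  have h := (tendsto_const_nhds (x := qPochInf q a)).div (tendsto_qPoch_qPochInf hq a)
    (qPochInf_ne_zero hq ha)
  rw [div_self (qPochInf_ne_zero hq ha)] at h
  refine h.congr fun n ↦ ((eq_div_iff (qPoch_ne_zero ha n)).2 ?_).symm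
  rw [mul_comm, qPoch_mul_qPochInf hq a n]

lemma mul_pow_ne_one_of_norm_lt_one (hq : ‖q‖ < 1) {a : ℂ} (ha : ‖a‖ < 1) (j : ℕ) :
    a * q ^ j ≠ 1 := by
  intro h
  have : ‖a * q ^ j‖ < 1 := by
    rw [norm_mul, norm_pow]
    exact mul_lt_one_of_nonneg_of_lt_one_left (norm_nonneg a) ha (pow_le_one₀ (norm_nonneg q) hq.le)
  simp [h] at this

end QPochhammer

lemma hasSum_succ_sub_of_tendsto {G : Type*} [AddCommGroup G] [TopologicalSpace G]
    [IsTopologicalAddGroup G] [T2Space G] {T : ℕ → G} {L : G}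
    (hs : Summable fun n ↦ T (n + 1) - T n) (hT : Tendsto T atTop (𝓝 L)) :
    HasSum (fun n ↦ T (n + 1) - T n) (L - T 0) := by
  refine (hs.hasSum_iff_tendsto_nat).2 ?_
  simpa only [Finset.sum_range_sub] using hT.sub_const (T 0)

noncomputable def tailProd (q : ℂ) (n : ℕ) : ℂ :=
  qPochInf q (-q ^ (n + 1)) * qPochInf q (q ^ (n + 1)) ^ 2 * qPoch (q ^ 3) (-q ^ 3) n

section TailProd

variable {q : ℂ}

lemma tailProd_succ_sub (hq : ‖q‖ < 1) (n : ℕ) :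
    tailProd q (n + 1) - tailProd q n = q ^ (n + 1) * qPochInf q (-q ^ (n + 1)) *
      qPochInf q (q ^ (n + 2)) ^ 2 * qPoch (q ^ 3) (-q ^ 3) n := by
  have hneg : qPochInf q (-q ^ (n + 1)) = (1 + q ^ (n + 1)) * qPochInf q (-q ^ (n + 2)) := by
    rw [qPochInf_eq_one_sub_mul hq]; ring_nf
  have hpos : qPochInf q (q ^ (n + 1)) = (1 - q ^ (n + 1)) * qPochInf q (q ^ (n + 2)) := by
    rw [qPochInf_eq_one_sub_mul hq]; ring_nf
  simp only [tailProd, qPoch_succ, hneg, hpos]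
  ring

lemma tendsto_qPochInf_neg_pow_succ (hq : ‖q‖ < 1) :
    Tendsto (fun n : ℕ ↦ qPochInf q (-q ^ (n + 1))) atTop (𝓝 1) := by
  simpa [pow_succ'] using
    tendsto_qPochInf_mul_pow hq (mul_pow_ne_one_of_norm_lt_one hq (a := -q) (by simpa using hq))

lemma tendsto_qPochInf_pow_add (hq : ‖q‖ < 1) (k : ℕ) :
    Tendsto (fun n : ℕ ↦ qPochInf q (q ^ (n + k + 1))) atTop (𝓝 1) := by
  have hk : ‖q ^ (k + 1)‖ < 1 := by
    rw [norm_pow]; exact pow_lt_one₀ (norm_nonneg q) hq (Nat.succ_ne_zero k)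
  refine (tendsto_qPochInf_mul_pow hq (mul_pow_ne_one_of_norm_lt_one hq hk)).congr fun n ↦ ?_
  ring_nf

lemma tendsto_qPoch_cube (hq : ‖q‖ < 1) :
    Tendsto (qPoch (q ^ 3) (-q ^ 3)) atTop (𝓝 (qPochInf (q ^ 3) (-q ^ 3))) :=
  tendsto_qPoch_qPochInf (by rw [norm_pow]; exact pow_lt_one₀ (norm_nonneg q) hq (by norm_num)) _

lemma tendsto_tailProd (hq : ‖q‖ < 1) :
    Tendsto (tailProd q) atTop (𝓝 (qPochInf (q ^ 3) (-q ^ 3))) := by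
  have h := ((tendsto_qPochInf_neg_pow_succ hq).mul ((tendsto_qPochInf_pow_add hq 0).pow 2)).mul
    (tendsto_qPoch_cube hq)
  simp only [add_zero, one_pow, one_mul] at h
  exact h

lemma summable_tailProd_succ_sub (hq : ‖q‖ < 1) :
    Summable fun n ↦ tailProd q (n + 1) - tailProd q n := by
  have hconv := ((tendsto_qPochInf_neg_pow_succ hq).mul
    ((tendsto_qPochInf_pow_add hq 1).pow 2)).mul (tendsto_qPoch_cube hq)
  have hgeom : Summable fun n : ℕ ↦ ‖q ^ (n + 1)‖ := by
    simpa [norm_pow, pow_succ] using (summable_geometric_of_lt_one (norm_nonneg q) hq).mul_right ‖q‖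
  refine (hgeom.mul_tendsto_const (Nat.cofinite_eq_atTop ▸ hconv)).congr fun n ↦ ?_
  rw [tailProd_succ_sub hq]
  ring

end TailProd

theorem thmAp_d (q : ℂ) (hq : ‖q‖ < 1) :
    ∑' n : ℕ, q ^ (n + 1) * qPochInf q (-q ^ (n + 1)) *
        (qPochInf q (q ^ (n + 2))) ^ 2 * qPoch (q ^ 3) (-q ^ 3) n
      = qPochInf (q ^ 3) (-q ^ 3) - qPochInf q (-q) * (qPochInf q q) ^ 2 := by
  have h :=
    (hasSum_succ_sub_of_tendsto (summable_tailProd_succ_sub hq) (tendsto_tailProd hq)).tsum_eq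
  simp only [tailProd_succ_sub hq] at h
  rw [h]
  simp [tailProd, qPoch]
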